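/- Let f: V → W be a persistence morphism between tame persistence modules with barcode bases A = {α_i ∼ [a_i, b_i)} and B = {β_j ∼ [c_j, d_j)}, and let F = (k_{α,β}) be the matrix associated to f in these bases. If k_{α_i, β_j} ≠ 0, then c_j ≤ a_i ≤ d_j ≤ b_i. -/

import Mathlib

/-!
Pick `t` at which `α_i` and `β_j` are both alive; coefficients in `B` can be read off by linear
independence of the generators alive at a given time, and restriction from `t` to `s ≥ t`
keeps the coefficient of `β_j` exactly when `c_j ≤ t` and `β_j` is still alive at `s`.
If `a_i < c_j`, restricting `f(α_i)` from `a_i` to `t` gives `f(α_i)` at `t`, whose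
`β_j`-coefficient `k_{α_i,β_j}` would have to come from nothing. If `b_i < d_j`, restricting
`f(α_i)` from `t` to `b_i` gives `f(0) = 0`, yet `β_j` survives there with coefficient
`k_{α_i,β_j}`.
-/

noncomputable section

/-- A persistence module over `ℤ/2`. -/
structure PersMod where
  V : ℝ → Type
  [grp : ∀ t, AddCommGroup (V t)]
  [mod : ∀ t, Module (ZMod 2) (V t)]
  ρ : ∀ s t : ℝ, s ≤ t → V s →ₗ[ZMod 2] V t
  ρ_id : ∀ (t : ℝ) (h : t ≤ t) (x : V t), ρ t t h x = x
  ρ_comp : ∀ (r s t : ℝ) (h1 : r ≤ s) (h2 : s ≤ t) (x : V r),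
    ρ s t h2 (ρ r s h1 x) = ρ r t (h1.trans h2) x

attribute [instance] PersMod.grp PersMod.mod

/-- A persistence morphism: a family of linear maps commuting with the structure maps. -/
structure PersHom (M N : PersMod) where
  map : ∀ t : ℝ, M.V t →ₗ[ZMod 2] N.V t
  comm : ∀ (s t : ℝ) (h : s ≤ t) (x : M.V s), map t (M.ρ s t h x) = N.ρ s t h (map s x)

/-- A barcode basis of the persistence module `M` with intervals `[a i, b i)`, `i : Fin N`:
for each generator a compatible family of vectors living on its interval and dying past it,
whose alive members form a basis of `M.V t` at every `t`. -/
structure BarcodeBasis (M : PersMod) (N : ℕ) (a b : Fin N → ℝ) where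
  vec : ∀ (i : Fin N) (t : ℝ), a i ≤ t → t < b i → M.V t
  compat : ∀ (i : Fin N) (s t : ℝ) (hs : a i ≤ s) (h : s ≤ t) (ht : t < b i),
    M.ρ s t h (vec i s hs (lt_of_le_of_lt h ht)) = vec i t (hs.trans h) ht
  dies : ∀ (i : Fin N) (s : ℝ) (hs : a i ≤ s) (hs' : s < b i) (t : ℝ) (h : s ≤ t),
    b i ≤ t → M.ρ s t h (vec i s hs hs') = 0
  indep : ∀ t : ℝ, LinearIndependent (ZMod 2)
    (fun i : {i : Fin N // a i ≤ t ∧ t < b i} => vec i.1 t i.2.1 i.2.2)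
  spans : ∀ t : ℝ, Submodule.span (ZMod 2)
    (Set.range (fun i : {i : Fin N // a i ≤ t ∧ t < b i} => vec i.1 t i.2.1 i.2.2)) = ⊤

namespace BarcodeBasis

variable {M : PersMod} {N : ℕ} {a b : Fin N → ℝ} (B : BarcodeBasis M N a b)

def gen (t : ℝ) (j : Fin N) : M.V t :=
  if h : a j ≤ t ∧ t < b j then B.vec j t h.1 h.2 else 0

lemma sum_dite_smul_vec_eq (k : Fin N → ZMod 2) (t : ℝ) :
    (∑ j, if h : a j ≤ t ∧ t < b j then k j • B.vec j t h.1 h.2 else 0) =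
      ∑ j, k j • B.gen t j := by
  refine Finset.sum_congr rfl fun j _ => ?_
  unfold gen
  split_ifs <;> simp

lemma ρ_gen {t s : ℝ} (hts : t ≤ s) (j : Fin N) :
    M.ρ t s hts (B.gen t j) = if a j ≤ t then B.gen s j else 0 := by
  unfold gen
  by_cases hat : a j ≤ t
  · by_cases htb : t < b j
    · by_cases hsb : s < b j
      · simp [hat, htb, hsb, hat.trans hts, B.compat j t s hat hts hsb]
      · simp [hat, htb, hsb, B.dies j t hat htb s hts (not_lt.mp hsb)]
    · have hsb : ¬ s < b j := fun hsb => htb (hts.trans_lt hsb)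
      simp [hat, htb, hsb]
  · simp [hat]

lemma ρ_sum_smul_gen (k : Fin N → ZMod 2) {t s : ℝ} (hts : t ≤ s) :
    M.ρ t s hts (∑ j, k j • B.gen t j) = ∑ j, (if a j ≤ t then k j else 0) • B.gen s j := by
  simp only [map_sum, map_smul, B.ρ_gen hts]
  refine Finset.sum_congr rfl fun j _ => ?_
  split_ifs <;> simp

lemma coeff_eq_of_sum_smul_gen_eq {g h : Fin N → ZMod 2} {t : ℝ}
    (hgh : ∑ j, g j • B.gen t j = ∑ j, h j • B.gen t j) {j : Fin N}
    (hj : a j ≤ t ∧ t < b j) : g j = h j := by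
  have hdead : ∀ j : {j // ¬(a j ≤ t ∧ t < b j)}, (g j - h j) • B.gen t j = 0 :=
    fun j => by simp [gen, dif_neg j.2]
  have hzero : ∑ j' : {j // a j ≤ t ∧ t < b j},
      (g j' - h j') • B.vec j'.1 t j'.2.1 j'.2.2 = 0 :=
    calc _ = ∑ j' : {j // a j ≤ t ∧ t < b j}, (g j' - h j') • B.gen t j' :=
          Finset.sum_congr rfl fun j' _ => by rw [gen, dif_pos j'.2]
      _ = ∑ j, (g j - h j) • B.gen t j := by
          rw [← Fintype.sum_subtype_add_sum_subtype (fun j => a j ≤ t ∧ t < b j),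
            Fintype.sum_eq_zero _ hdead, add_zero]
      _ = 0 := by simp only [sub_smul, Finset.sum_sub_distrib, hgh, sub_self]
  exact sub_eq_zero.mp (Fintype.linearIndependent_iff.mp (B.indep t) _ hzero ⟨j, hj⟩)

lemma coeff_eq_of_ρ_sum_smul_gen_eq {g h : Fin N → ZMod 2} {t s : ℝ} (hts : t ≤ s)
    (hgh : M.ρ t s hts (∑ j, g j • B.gen t j) = ∑ j, h j • B.gen s j) {j : Fin N}
    (hj : a j ≤ s ∧ s < b j) : (if a j ≤ t then g j else 0) = h j := by
  rw [B.ρ_sum_smul_gen g hts] at hgh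
  exact B.coeff_eq_of_sum_smul_gen_eq hgh hj

end BarcodeBasis

theorem associated_matrix_interval_inequalities
    (M M' : PersMod) (N N' : ℕ) (a b : Fin N → ℝ) (c d : Fin N' → ℝ)
    (A : BarcodeBasis M N a b) (B : BarcodeBasis M' N' c d)
    (f : PersHom M M') (F : Fin N' → Fin N → ZMod 2)
    (hF : ∀ (i : Fin N) (t : ℝ) (h1 : a i ≤ t) (h2 : t < b i),
      f.map t (A.vec i t h1 h2) =
        ∑ j : Fin N', if h : c j ≤ t ∧ t < d j then F j i • B.vec j t h.1 h.2 else 0)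
    (hsupp : ∀ (i : Fin N) (j : Fin N'), F j i ≠ 0 →
      ∃ t : ℝ, a i ≤ t ∧ t < b i ∧ c j ≤ t ∧ t < d j)
    (i : Fin N) (j : Fin N') (hne : F j i ≠ 0) :
    c j ≤ a i ∧ a i ≤ d j ∧ d j ≤ b i := by
  obtain ⟨t, hat, htb, hct, htd⟩ := hsupp i j hne
  simp only [B.sum_dite_smul_vec_eq] at hF
  refine ⟨?_, hat.trans htd.le, ?_⟩
  · by_contra hlt
    have hρ : M'.ρ (a i) t hat (∑ j, F j i • B.gen (a i) j) = ∑ j, F j i • B.gen t j := by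
      rw [← hF i (a i) le_rfl (hat.trans_lt htb), ← hF i t hat htb, ← f.comm,
        A.compat i (a i) t le_rfl hat htb]
    have hcoeff := B.coeff_eq_of_ρ_sum_smul_gen_eq hat hρ ⟨hct, htd⟩
    rw [if_neg hlt] at hcoeff
    exact hne hcoeff.symm
  · by_contra hlt
    have hρ : M'.ρ t (b i) htb.le (∑ j, F j i • B.gen t j) =
        ∑ j, (0 : ZMod 2) • B.gen (b i) j := by
      rw [← hF i t hat htb, ← f.comm, A.dies i t hat htb (b i) htb.le le_rfl]
      simp
    have hcoeff := B.coeff_eq_of_ρ_sum_smul_gen_eq htb.le hρ ⟨hct.trans htb.le, not_le.mp hlt⟩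
    rw [if_pos hct] at hcoeff
    exact hne hcoeff
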